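/- arXiv:1410.4029 — 2 statements merged into one kernel-verified Lean document; each statement's English description precedes it below -/
import Mathlib

section
/- Let ψ : ℝ≥0 → ℝ≥0 be a sub-root function, i.e., ψ is nondecreasing and r ↦ ψ(r)/√r is nonincreasing on (0, ∞). Then for any C > 0, if ψ is continuous and positive somewhere, the equation ψ(r) = r/C has a unique positive solution r*. -/
lemma subroot_aux (u v : ℝ) (hu : 0 < u) (hv : 0 < v)
    (h : v * Real.sqrt u ≤ u * Real.sqrt v) : v ≤ u := by
  have hsu : 0 < Real.sqrt u := Real.sqrt_pos.mpr hu
  have hsv : 0 < Real.sqrt v := Real.sqrt_pos.mpr hv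
  have hu2 : Real.sqrt u * Real.sqrt u = u := Real.mul_self_sqrt hu.le
  have hv2 : Real.sqrt v * Real.sqrt v = v := Real.mul_self_sqrt hv.le
  have hle : Real.sqrt v ≤ Real.sqrt u := by nlinarith [mul_pos hsu hsv]
  nlinarith

theorem subroot_unique_fixed_point (ψ : ℝ → ℝ)
    (hnonneg : ∀ r, 0 ≤ r → 0 ≤ ψ r)
    (hmono : MonotoneOn ψ (Set.Ici 0))
    (hsubroot : ∀ r s : ℝ, 0 < r → r ≤ s → ψ s / Real.sqrt s ≤ ψ r / Real.sqrt r)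
    (hcont : ContinuousOn ψ (Set.Ici 0))
    (hpos : ∃ r₀ : ℝ, 0 < r₀ ∧ 0 < ψ r₀)
    (C : ℝ) (hC : 0 < C) :
    ∃! r : ℝ, 0 < r ∧ ψ r = r / C := by
  obtain ⟨r₀, hr₀, hψr₀⟩ := hpos
  set c : ℝ := ψ r₀ / Real.sqrt r₀ with hc
  have hsqrt₀ : 0 < Real.sqrt r₀ := Real.sqrt_pos.mpr hr₀
  have hcpos : 0 < c := div_pos hψr₀ hsqrt₀
  have hcC : 0 < c * C := mul_pos hcpos hC
  set a : ℝ := min r₀ ((c * C) ^ 2 / 2) with ha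
  set b : ℝ := max r₀ ((c * C) ^ 2 + 1) with hb
  have hapos : 0 < a := lt_min hr₀ (by positivity)
  have har₀ : a ≤ r₀ := min_le_left _ _
  have hr₀b : r₀ ≤ b := le_max_left _ _
  have hab : a ≤ b := har₀.trans hr₀b
  have hbpos : 0 < b := hr₀.trans_le hr₀b
  have hsapos : 0 < Real.sqrt a := Real.sqrt_pos.mpr hapos
  have hsbpos : 0 < Real.sqrt b := Real.sqrt_pos.mpr hbpos
  have hsa2 : Real.sqrt a * Real.sqrt a = a := Real.mul_self_sqrt hapos.le
  have hsb2 : Real.sqrt b * Real.sqrt b = b := Real.mul_self_sqrt hbpos.le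
  -- f a > 0
  have hsa : Real.sqrt a < c * C := by
    rw [show c * C = Real.sqrt ((c * C) ^ 2) from (Real.sqrt_sq hcC.le).symm]
    exact Real.sqrt_lt_sqrt hapos.le
      (lt_of_le_of_lt (min_le_right _ _) (by nlinarith))
  have hψa : c * Real.sqrt a ≤ ψ a := by
    have h := hsubroot a r₀ hapos har₀
    rw [div_le_div_iff₀ hsqrt₀ hsapos] at h
    rw [hc, div_mul_eq_mul_div, div_le_iff₀ hsqrt₀]
    linarith
  have hfa : 0 < ψ a - a / C := by
    have h1 : a / C < c * Real.sqrt a := by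
      rw [div_lt_iff₀ hC]
      nlinarith
    linarith
  -- f b < 0
  have hsb : c * C < Real.sqrt b := by
    rw [show c * C = Real.sqrt ((c * C) ^ 2) from (Real.sqrt_sq hcC.le).symm]
    exact Real.sqrt_lt_sqrt (by positivity)
      (lt_of_lt_of_le (by linarith) (le_max_right _ _))
  have hψb : ψ b ≤ c * Real.sqrt b := by
    have h := hsubroot r₀ b hr₀ hr₀b
    rw [div_le_div_iff₀ hsbpos hsqrt₀] at h
    rw [hc, div_mul_eq_mul_div, le_div_iff₀ hsqrt₀]
    linarith
  have hfb : ψ b - b / C < 0 := by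
    have h1 : c * Real.sqrt b < b / C := by
      rw [lt_div_iff₀ hC]
      nlinarith
    linarith
  -- IVT
  have hsub : Set.Icc a b ⊆ Set.Ici (0:ℝ) := fun x hx => hapos.le.trans hx.1
  have hcontf : ContinuousOn (fun r => ψ r - r / C) (Set.Icc a b) :=
    ((hcont.mono hsub).sub ((continuousOn_id.div_const C)))
  have hivt := intermediate_value_Icc' hab hcontf
  have h0 : (0:ℝ) ∈ Set.Icc (ψ b - b / C) (ψ a - a / C) := ⟨hfb.le, hfa.le⟩
  obtain ⟨r, hrmem, hr⟩ := hivt h0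
  have hrpos : 0 < r := hapos.trans_le hrmem.1
  have hreq : ψ r = r / C := by dsimp at hr; linarith
  refine ⟨r, ⟨hrpos, hreq⟩, ?_⟩
  rintro s ⟨hspos, hs⟩
  -- uniqueness
  have key : ∀ u v : ℝ, 0 < u → u ≤ v → ψ u = u / C → ψ v = v / C → v ≤ u := by
    intro u v hu huv hψu hψv
    have hvpos : 0 < v := hu.trans_le huv
    have hsu : 0 < Real.sqrt u := Real.sqrt_pos.mpr hu
    have hsv : 0 < Real.sqrt v := Real.sqrt_pos.mpr hvpos
    have hu2 : Real.sqrt u * Real.sqrt u = u := Real.mul_self_sqrt hu.le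
    have hv2 : Real.sqrt v * Real.sqrt v = v := Real.mul_self_sqrt hvpos.le
    have h := hsubroot u v hu huv
    rw [hψu, hψv, div_le_div_iff₀ hsv hsu] at h
    have h' : v * Real.sqrt u ≤ u * Real.sqrt v := by
      calc v * Real.sqrt u = (v / C * Real.sqrt u) * C := by field_simp
        _ ≤ (u / C * Real.sqrt v) * C := mul_le_mul_of_nonneg_right h hC.le
        _ = u * Real.sqrt v := by field_simp
    exact subroot_aux u v hu hvpos h'
  rcases le_total s r with h | h
  · exact le_antisymm h (key s r hspos h hs hreq)
  · exact le_antisymm (key r s hrpos h hreq hs) h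
end

section
/- For any η ∈ [0,1] and any α ∈ ℝ, with φ the logit loss, η·φ(-α) + (1-η)·φ(α) ≥ H(η), where H(η) = -η log₂ η - (1-η) log₂(1-η) is the binary entropy (with 0·log 0 = 0); equality holds when α = ln(η/(1-η)) for η ∈ (0,1). -/
/-- The logit loss `φ(t) = log₂(1 + eᵗ)`. -/
noncomputable def logitLoss (t : ℝ) : ℝ := Real.log (1 + Real.exp t) / Real.log 2

/-- The binary entropy `H(η) = -η log₂ η - (1-η) log₂ (1-η)`
(note that `Real.log 0 = 0` in Mathlib, so the convention `0 · log 0 = 0` is automatic). -/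
noncomputable def binEntropy (η : ℝ) : ℝ :=
  -(η * Real.log η) / Real.log 2 - (1 - η) * Real.log (1 - η) / Real.log 2

/-!
Writing `p = σ(α)` for the sigmoid, `φ(-α) = -log₂ p` and `φ(α) = -log₂ (1 - p)`, so the
conditional risk is the binary cross-entropy of `η` against `p`. Gibbs' inequality bounds it
below by the entropy of `η`, with equality at `p = η`, i.e. at `α = log (η / (1 - η))`.
-/

section

open Real

noncomputable def binCrossEntropy (η p : ℝ) : ℝ := -(η * log p) - (1 - η) * log (1 - p)

lemma binCrossEntropy_self (η : ℝ) : binCrossEntropy η η = Real.binEntropy η := by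
  simp only [binCrossEntropy, Real.binEntropy, log_inv]
  ring

lemma sub_le_mul_log_sub_mul_log {x y : ℝ} (hx : 0 ≤ x) (hy : 0 < y) :
    x - y ≤ x * log x - x * log y := by
  rcases hx.eq_or_lt with rfl | hx
  · simpa using hy.le
  have h := mul_le_mul_of_nonneg_left (self_sub_one_le_mul_log (div_nonneg hx.le hy.le)) hy.le
  rw [log_div hx.ne' hy.ne'] at h
  field_simp at h
  linarith

lemma binEntropy_le_binCrossEntropy {η p : ℝ} (hη : η ∈ Set.Icc 0 1) (hp : p ∈ Set.Ioo 0 1) :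
    Real.binEntropy η ≤ binCrossEntropy η p := by
  have h₁ := sub_le_mul_log_sub_mul_log hη.1 hp.1
  have h₂ := sub_le_mul_log_sub_mul_log (sub_nonneg.2 hη.2) (sub_pos.2 hp.2)
  rw [← binCrossEntropy_self]
  unfold binCrossEntropy
  linarith

lemma logitLoss_eq_neg_log_sigmoid_neg (t : ℝ) : logitLoss t = -log (sigmoid (-t)) / log 2 := by
  rw [logitLoss, sigmoid_def, neg_neg, log_inv, neg_neg]

lemma logit_risk_eq_binCrossEntropy_sigmoid (η α : ℝ) :
    η * logitLoss (-α) + (1 - η) * logitLoss α = binCrossEntropy η (sigmoid α) / log 2 := by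
  rw [logitLoss_eq_neg_log_sigmoid_neg, logitLoss_eq_neg_log_sigmoid_neg, neg_neg, sigmoid_neg,
    binCrossEntropy]
  ring

lemma sigmoid_log_div_one_sub {η : ℝ} (hη : η ∈ Set.Ioo 0 1) :
    sigmoid (log (η / (1 - η))) = η := by
  have h₁ : 0 < 1 - η := sub_pos.2 hη.2
  have h₂ : 1 + (η / (1 - η))⁻¹ = η⁻¹ := by
    field_simp [hη.1.ne']
    ring
  rw [sigmoid_def, exp_neg, exp_log (div_pos hη.1 h₁), h₂, inv_inv]

end

lemma binEntropy_eq_div_log_two (η : ℝ) : binEntropy η = Real.binEntropy η / Real.log 2 := by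
  rw [← binCrossEntropy_self, binEntropy, binCrossEntropy]
  ring

theorem logit_risk_ge_binary_entropy :
    (∀ η ∈ Set.Icc (0:ℝ) 1, ∀ α : ℝ,
      binEntropy η ≤ η * logitLoss (-α) + (1 - η) * logitLoss α) ∧
    (∀ η ∈ Set.Ioo (0:ℝ) 1,
      η * logitLoss (-(Real.log (η / (1 - η)))) + (1 - η) * logitLoss (Real.log (η / (1 - η)))
        = binEntropy η) := by
  have hlog2 : 0 < Real.log 2 := Real.log_pos one_lt_two
  refine ⟨fun η hη α ↦ ?_, fun η hη ↦ ?_⟩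
  · rw [logit_risk_eq_binCrossEntropy_sigmoid, binEntropy_eq_div_log_two]
    exact div_le_div_of_nonneg_right
      (binEntropy_le_binCrossEntropy hη ⟨Real.sigmoid_pos α, Real.sigmoid_lt_one α⟩) hlog2.le
  · rw [logit_risk_eq_binCrossEntropy_sigmoid, sigmoid_log_div_one_sub hη, binCrossEntropy_self,
      binEntropy_eq_div_log_two]
end
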